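/- Let X be a Banach space and κ an infinite cardinal. Then X has the κ-Daugavet property if and only if for every family {y_α : α < κ} ⊆ S_X, every ε > 0, and every finite convex combination C = Σ_{i=1}^n λ_i S_i of slices S_i of B_X (λ_i ≥ 0, Σλ_i = 1), there exists x ∈ C with ‖y_α + x‖ > 2 − ε for all α < κ. -/

import Mathlib

/-!
If `‖u‖, ‖x‖ ≤ 1` and `α, β ≥ 0`, then `‖α • u + β • x‖ ≥ (α + β) (‖u + x‖ - 1)`. Hence, when the
Daugavet property provides `x` in a slice with `‖v / ‖v‖ + x‖ > 2 - δ` simultaneously for all `v`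
in a family of at most `κ` nonzero vectors, adding `t • x` to each `v` raises its norm to at least
`(‖v‖ + t) (1 - δ)`. Choosing the points of the slices one at a time, each time for the family of
all `y + (λ-weighted sum of the points already chosen)` with `y ∈ Y`, gives
`‖y + ∑ λ_i x_i‖ ≥ 2 (1 - δ)ⁿ` for all `y ∈ Y`.
-/

universe u

open Finset in
/-- A slice of the closed unit ball of `X`. -/
def ballSlice {X : Type u} [NormedAddCommGroup X] [NormedSpace ℝ X]
    (f : X →L[ℝ] ℝ) (a : ℝ) : Set X :=
  {x | ‖x‖ ≤ 1 ∧ ‖f‖ - a < f x}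

/-- `X` has the `κ`-Daugavet property. -/
def HasKDaugavet (X : Type u) [NormedAddCommGroup X] [NormedSpace ℝ X]
    (κ : Cardinal.{u}) : Prop :=
  ∀ Y : Set X, Cardinal.mk Y ≤ κ → (∀ y ∈ Y, ‖y‖ = 1) →
    ∀ (f : X →L[ℝ] ℝ) (a : ℝ), 0 < a → ∀ ε : ℝ, 0 < ε →
      ∃ x ∈ ballSlice f a, ∀ y ∈ Y, 2 - ε < ‖y + x‖

open Filter Topology in
theorem exists_pos_lt_one_lt_one_sub_pow {c : ℝ} (hc : c < 1) (n : ℕ) :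
    ∃ δ : ℝ, 0 < δ ∧ δ < 1 ∧ c < (1 - δ) ^ n := by
  have hlim : Tendsto (fun δ : ℝ => (1 - δ) ^ n) (𝓝[>] 0) (𝓝 1) := by
    have : Continuous fun δ : ℝ => (1 - δ) ^ n := by fun_prop
    simpa using (this.tendsto 0).mono_left nhdsWithin_le_nhds
  have hlt_one : ∀ᶠ δ in 𝓝[>] (0 : ℝ), δ < 1 :=
    nhdsWithin_le_nhds (Iio_mem_nhds one_pos)
  obtain ⟨δ, ⟨hδ1, hcδ⟩, hδ0⟩ :=
    ((hlt_one.and (hlim.eventually (lt_mem_nhds hc))).and self_mem_nhdsWithin).exists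
  exact ⟨δ, hδ0, hδ1, hcδ⟩

section

variable {X : Type u} [NormedAddCommGroup X] [NormedSpace ℝ X]

theorem mul_norm_add_sub_one_le_norm_smul_add_smul {u x : X} (hu : ‖u‖ ≤ 1) (hx : ‖x‖ ≤ 1)
    {α β : ℝ} (hα : 0 ≤ α) (hβ : 0 ≤ β) :
    (α + β) * (‖u + x‖ - 1) ≤ ‖α • u + β • x‖ := by
  have hux : ‖u + x‖ ≤ 2 := (norm_add_le u x).trans (by linarith)
  rcases le_total β α with hβα | hαβ
  · have key : α * ‖u + x‖ ≤ ‖α • u + β • x‖ + (α - β) * ‖x‖ :=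
      calc α * ‖u + x‖ = ‖(α • u + β • x) + (α - β) • x‖ := by
            rw [← norm_smul_of_nonneg hα]; congr 1; module
        _ ≤ ‖α • u + β • x‖ + (α - β) * ‖x‖ := by
            rw [← norm_smul_of_nonneg (sub_nonneg.2 hβα)]; exact norm_add_le _ _
    nlinarith
  · have key : β * ‖u + x‖ ≤ ‖α • u + β • x‖ + (β - α) * ‖u‖ :=
      calc β * ‖u + x‖ = ‖(α • u + β • x) + (β - α) • u‖ := by
            rw [← norm_smul_of_nonneg hβ]; congr 1; module
        _ ≤ ‖α • u + β • x‖ + (β - α) * ‖u‖ := by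
            rw [← norm_smul_of_nonneg (sub_nonneg.2 hαβ)]; exact norm_add_le _ _
    nlinarith

theorem HasKDaugavet.exists_mem_ballSlice_le_norm_add_smul {κ : Cardinal.{u}}
    (hX : HasKDaugavet X κ) {V : Set X} (hV : Cardinal.mk V ≤ κ) (hV0 : ∀ v ∈ V, v ≠ 0)
    (f : X →L[ℝ] ℝ) {a : ℝ} (ha : 0 < a) {δ : ℝ} (hδ : 0 < δ) {t : ℝ} (ht : 0 ≤ t) :
    ∃ x ∈ ballSlice f a, ∀ v ∈ V, (‖v‖ + t) * (1 - δ) ≤ ‖v + t • x‖ := by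
  have hunit : ∀ u ∈ (fun v => ‖v‖⁻¹ • v) '' V, ‖u‖ = 1 := by
    rintro _ ⟨v, hv, rfl⟩
    exact norm_smul_inv_norm (hV0 v hv)
  obtain ⟨x, hx, hux⟩ := hX _ (Cardinal.mk_image_le.trans hV) hunit f a ha δ hδ
  refine ⟨x, hx, fun v hv => ?_⟩
  have hv_eq : ‖v‖ • (‖v‖⁻¹ • v) = v := by
    rw [smul_smul, mul_inv_cancel₀ (norm_ne_zero_iff.2 (hV0 v hv)), one_smul]
  calc (‖v‖ + t) * (1 - δ) ≤ (‖v‖ + t) * (‖‖v‖⁻¹ • v + x‖ - 1) := by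
        have := hux _ ⟨v, hv, rfl⟩
        exact mul_le_mul_of_nonneg_left (by linarith) (by positivity)
    _ ≤ ‖‖v‖ • (‖v‖⁻¹ • v) + t • x‖ :=
        mul_norm_add_sub_one_le_norm_smul_add_smul (hunit _ ⟨v, hv, rfl⟩).le hx.1
          (norm_nonneg v) ht
    _ = ‖v + t • x‖ := by rw [hv_eq]

theorem HasKDaugavet.exists_forall_mem_ballSlice_le_norm_add_sum {κ : Cardinal.{u}}
    (hX : HasKDaugavet X κ) {Y : Set X} (hY : Cardinal.mk Y ≤ κ) (hY1 : ∀ y ∈ Y, ‖y‖ = 1)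
    {δ : ℝ} (hδ0 : 0 < δ) (hδ1 : δ < 1) :
    ∀ (n : ℕ) (lam : Fin n → ℝ) (f : Fin n → X →L[ℝ] ℝ) (a : Fin n → ℝ),
      (∀ i, 0 ≤ lam i) → (∀ i, 0 < a i) →
      ∃ x : Fin n → X, (∀ i, x i ∈ ballSlice (f i) (a i)) ∧
        ∀ y ∈ Y, (1 + ∑ i, lam i) * (1 - δ) ^ n ≤ ‖y + ∑ i, lam i • x i‖ := by
  intro n
  induction n with
  | zero => exact fun _ _ _ _ _ => ⟨Fin.elim0, fun i => i.elim0, fun y hy => by simp [hY1 y hy]⟩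
  | succ n ih =>
    intro lam f a hlam ha
    obtain ⟨x, hx, hnorm⟩ := ih (fun i => lam i.succ) (fun i => f i.succ) (fun i => a i.succ)
      (fun i => hlam _) (fun i => ha _)
    set w := ∑ i, lam i.succ • x i
    have htail_pos : 0 < (1 + ∑ i : Fin n, lam i.succ) * (1 - δ) ^ n := by
      have : 0 ≤ ∑ i : Fin n, lam i.succ := Finset.sum_nonneg fun i _ => hlam i.succ
      exact mul_pos (by linarith) (pow_pos (by linarith) n)
    have hV0 : ∀ v ∈ (· + w) '' Y, v ≠ 0 := by
      rintro _ ⟨y, hy, rfl⟩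
      exact norm_pos_iff.1 (htail_pos.trans_le (hnorm y hy))
    obtain ⟨x₀, hx₀, hnorm₀⟩ := hX.exists_mem_ballSlice_le_norm_add_smul
      (Cardinal.mk_image_le.trans hY) hV0 (f 0) (ha 0) hδ0 (hlam 0)
    refine ⟨Fin.cons x₀ x, Fin.cases hx₀ hx, fun y hy => ?_⟩
    have hpow : (1 - δ) ^ (n + 1) ≤ 1 - δ :=
      pow_le_of_le_one (by linarith) (by linarith) n.succ_ne_zero
    calc (1 + ∑ i, lam i) * (1 - δ) ^ (n + 1)
        = (1 + ∑ i : Fin n, lam i.succ) * (1 - δ) ^ n * (1 - δ) + lam 0 * (1 - δ) ^ (n + 1) := by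
          rw [Fin.sum_univ_succ]; ring
      _ ≤ (‖y + w‖ + lam 0) * (1 - δ) := by
          nlinarith [hnorm y hy, mul_le_mul_of_nonneg_left hpow (hlam 0)]
      _ ≤ ‖(y + w) + lam 0 • x₀‖ := hnorm₀ _ ⟨y, hy, rfl⟩
      _ = ‖y + ∑ i, lam i • (Fin.cons x₀ x : Fin (n + 1) → X) i‖ := by
          rw [Fin.sum_univ_succ]; simp only [Fin.cons_zero, Fin.cons_succ, w]; abel_nf

end

theorem kDaugavet_iff_convex_combinations_general (X : Type u) [NormedAddCommGroup X]
    [NormedSpace ℝ X] (κ : Cardinal.{u}) :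
    HasKDaugavet X κ ↔
      ∀ Y : Set X, Cardinal.mk Y ≤ κ → (∀ y ∈ Y, ‖y‖ = 1) →
        ∀ ε : ℝ, 0 < ε → ∀ n : ℕ, 0 < n →
          ∀ (lam : Fin n → ℝ) (f : Fin n → X →L[ℝ] ℝ) (a : Fin n → ℝ),
            (∀ i, 0 ≤ lam i) → (∑ i, lam i) = 1 → (∀ i, 0 < a i) →
            ∃ x : Fin n → X, (∀ i, x i ∈ ballSlice (f i) (a i)) ∧
              ∀ y ∈ Y, 2 - ε < ‖y + ∑ i, lam i • x i‖ := by
  constructor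
  · intro hX Y hY hY1 ε hε n _ lam f a hlam hsum ha
    obtain ⟨δ, hδ0, hδ1, hδε⟩ := exists_pos_lt_one_lt_one_sub_pow (c := 1 - ε / 2) (by linarith) n
    obtain ⟨x, hx, hnorm⟩ :=
      hX.exists_forall_mem_ballSlice_le_norm_add_sum hY hY1 hδ0 hδ1 n lam f a hlam ha
    refine ⟨x, hx, fun y hy => ?_⟩
    have := hnorm y hy
    rw [hsum] at this
    linarith
  · intro h Y hY hY1 f a ha ε hε
    obtain ⟨x, hx, hnorm⟩ := h Y hY hY1 ε hε 1 one_pos (fun _ => 1) (fun _ => f) (fun _ => a)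
      (fun _ => zero_le_one) (by simp) (fun _ => ha)
    exact ⟨x 0, hx 0, fun y hy => by simpa using hnorm y hy⟩

/-- Transfinite Shvidkoy lemma: the `κ`-Daugavet property is equivalent to the analogous
statement with slices replaced by finite convex combinations of slices. -/
theorem kDaugavet_iff_convex_combinations (X : Type u) [NormedAddCommGroup X]
    [NormedSpace ℝ X] [CompleteSpace X] (κ : Cardinal.{u}) (hκ : Cardinal.aleph0 ≤ κ) :
    HasKDaugavet X κ ↔
      ∀ Y : Set X, Cardinal.mk Y ≤ κ → (∀ y ∈ Y, ‖y‖ = 1) →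
        ∀ ε : ℝ, 0 < ε → ∀ n : ℕ, 0 < n →
          ∀ (lam : Fin n → ℝ) (f : Fin n → X →L[ℝ] ℝ) (a : Fin n → ℝ),
            (∀ i, 0 ≤ lam i) → (∑ i, lam i) = 1 → (∀ i, 0 < a i) →
            ∃ x : Fin n → X, (∀ i, x i ∈ ballSlice (f i) (a i)) ∧
              ∀ y ∈ Y, 2 - ε < ‖y + ∑ i, lam i • x i‖ :=
  kDaugavet_iff_convex_combinations_general X κ
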